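/- Let m ≥ 3 and let b̃ : ℝ^m → ℝ be measurable with 0 ≤ b̃(x) ≤ C(1+|x|²)^{-2} for all x ∈ ℝ^m and some constant C > 0. Then for every α ∈ (1/2, 1) there exists a constant C' > 0 such that for all ε ∈ (0,1): ∫_{ℝ^m} b̃(x) U_ε(x)² dx ≤ C'(ε² + ε^{2(1−α)}). In particular, ∫_{ℝ^m} b̃(x) U_ε(x)² dx → 0 as ε → 0⁺. -/

import Mathlib

open MeasureTheory Filter

/-- The standard bubble (Aubin–Talenti instanton)
`U_ε(x) = [m(m−2)]^{(m−2)/4} (ε/(ε² + |x|²))^{(m−2)/2}`. -/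
noncomputable def bubble (m : ℕ) (ε : ℝ) (x : EuclideanSpace ℝ (Fin m)) : ℝ :=
  ((m : ℝ) * ((m : ℝ) - 2)) ^ (((m : ℝ) - 2) / 4) *
    (ε / (ε ^ 2 + ‖x‖ ^ 2)) ^ (((m : ℝ) - 2) / 2)

/-!
Write `U_ε(x)² = K² (ε / (ε² + |x|²))^(m-2)` and split `m - 2 = a + b` with `2a = m - 4 + 2α`,
`2b = m - 2α`, both nonnegative for `m ≥ 3`, `α ∈ [1/2, 1]`. Then `ε^(2a) |x|^(2b) ≤ (ε² + |x|²)^(a+b)`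
gives `U_ε(x)² ≤ K² ε^(2(1-α)) |x|^(-(m-2α))`. Because `0 < m - 2α < m < (m - 2α) + 4`, the weight
`|x|^(-(m-2α)) (1 + |x|²)^(-2)` is integrable both at the origin and at infinity, so
`∫ b̃ U_ε² ≤ C K² J ε^(2(1-α))` with `J` its integral, and both claims follow.
-/

theorem Real.rpow_mul_rpow_le_add_rpow {a b u v : ℝ} (ha : 0 ≤ a) (hb : 0 ≤ b) (hab : 0 < a + b)
    (hu : 0 ≤ u) (hv : 0 ≤ v) : a ^ u * b ^ v ≤ (a + b) ^ (u + v) := by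
  rw [Real.rpow_add hab]
  gcongr <;> linarith

theorem div_sq_add_sq_rpow_le {ε r a b : ℝ} (hε : 0 < ε) (hr : 0 < r) (ha : 0 ≤ a) (hb : 0 ≤ b) :
    (ε / (ε ^ 2 + r ^ 2)) ^ (a + b) ≤ ε ^ (b - a) * r ^ (-(2 * b)) := by
  have hsq : ∀ {t : ℝ} (c : ℝ), 0 < t → t ^ (2 * c) = (t ^ 2) ^ c := fun c ht ↦ by
    rw [Real.rpow_mul ht.le]; norm_cast
  have key : ε ^ (2 * a) * r ^ (2 * b) ≤ (ε ^ 2 + r ^ 2) ^ (a + b) := by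
    rw [hsq a hε, hsq b hr]
    exact Real.rpow_mul_rpow_le_add_rpow (by positivity) (by positivity) (by positivity) ha hb
  calc (ε / (ε ^ 2 + r ^ 2)) ^ (a + b) = ε ^ (a + b) / (ε ^ 2 + r ^ 2) ^ (a + b) :=
        Real.div_rpow hε.le (by positivity) _
    _ ≤ ε ^ (a + b) / (ε ^ (2 * a) * r ^ (2 * b)) := by gcongr
    _ = ε ^ (b - a) * r ^ (-(2 * b)) := by
        rw [div_mul_eq_div_div, ← Real.rpow_sub hε, Real.rpow_neg hr.le, div_eq_mul_inv,
          show a + b - 2 * a = b - a by ring]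

theorem bubble_sq (m : ℕ) {ε : ℝ} (hε : 0 ≤ ε) (x : EuclideanSpace ℝ (Fin m)) :
    bubble m ε x ^ 2 = (((m : ℝ) * ((m : ℝ) - 2)) ^ (((m : ℝ) - 2) / 4)) ^ 2 *
      (ε / (ε ^ 2 + ‖x‖ ^ 2)) ^ ((m : ℝ) - 2) := by
  rw [bubble, mul_pow, ← Real.rpow_mul_natCast (by positivity : 0 ≤ ε / (ε ^ 2 + ‖x‖ ^ 2))]
  norm_num

theorem bubble_sq_le {m : ℕ} {α ε : ℝ} (hα₁ : 4 ≤ m + 2 * α) (hα₂ : 2 * α ≤ m) (hε : 0 < ε)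
    {x : EuclideanSpace ℝ (Fin m)} (hx : x ≠ 0) :
    bubble m ε x ^ 2 ≤ (((m : ℝ) * ((m : ℝ) - 2)) ^ (((m : ℝ) - 2) / 4)) ^ 2 *
      (ε ^ (2 * (1 - α)) * ‖x‖ ^ (-((m : ℝ) - 2 * α))) := by
  have h := div_sq_add_sq_rpow_le (a := (m - 4 + 2 * α) / 2) (b := (m - 2 * α) / 2) hε
    (norm_pos_iff.mpr hx) (by linarith) (by linarith)
  rw [bubble_sq m hε.le]
  refine mul_le_mul_of_nonneg_left ?_ (sq_nonneg _)
  rwa [show ((m : ℝ) - 4 + 2 * α) / 2 + (m - 2 * α) / 2 = m - 2 by ring,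
    show ((m : ℝ) - 2 * α) / 2 - (m - 4 + 2 * α) / 2 = 2 * (1 - α) by ring,
    show 2 * (((m : ℝ) - 2 * α) / 2) = m - 2 * α by ring] at h

theorem Real.rpow_neg_le_two_rpow_mul_one_add_sq_rpow_neg {t p : ℝ} (ht : 1 ≤ t) (hp : 0 ≤ p) :
    t ^ (-p) ≤ 2 ^ (p / 2) * (1 + t ^ 2) ^ (-p / 2) := by
  have ht0 : 0 < t := by linarith
  have hsq : t ^ (-p) = (t ^ 2) ^ (-p / 2) := by
    rw [← Real.rpow_natCast_mul ht0.le]; ring_nf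
  calc t ^ (-p) = 2 ^ (p / 2) * (2 * t ^ 2) ^ (-p / 2) := by
        rw [Real.mul_rpow (by norm_num) (by positivity), ← mul_assoc, ← Real.rpow_add two_pos,
          hsq, neg_div, add_neg_cancel, Real.rpow_zero, one_mul]
    _ ≤ 2 ^ (p / 2) * (1 + t ^ 2) ^ (-p / 2) := by
        gcongr ?_ * ?_
        exact Real.rpow_le_rpow_of_nonpos (by positivity) (by nlinarith) (by linarith)

section

variable {E : Type*} [NormedAddCommGroup E] [NormedSpace ℝ E] [FiniteDimensional ℝ E]
  [MeasurableSpace E] [BorelSpace E] {μ : Measure E} [μ.IsAddHaarMeasure]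

open Metric Module in
theorem integrable_norm_rpow_neg_mul_rpow_neg_one_add_norm_sq {p r : ℝ} (hp : 0 ≤ p)
    (hpd : p < finrank ℝ E) (hdr : (finrank ℝ E : ℝ) < p + r) :
    Integrable (fun x : E ↦ ‖x‖ ^ (-p) * (1 + ‖x‖ ^ 2) ^ (-r / 2)) μ := by
  have hmeas : AEStronglyMeasurable (fun x : E ↦ ‖x‖ ^ (-p) * (1 + ‖x‖ ^ 2) ^ (-r / 2)) μ :=
    (by fun_prop : Measurable _).aestronglyMeasurable
  have hr : 0 < r := by linarith
  rw [← integrableOn_univ, ← Set.compl_union_self (ball (0 : E) 1), integrableOn_union]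
  constructor
  · refine ((integrable_rpow_neg_one_add_norm_sq hdr).const_mul (2 ^ (p / 2))).integrableOn.mono'
      hmeas.restrict ?_
    filter_upwards [ae_restrict_mem measurableSet_ball.compl] with x hx
    have hx1 : 1 ≤ ‖x‖ := by simpa using hx
    calc ‖‖x‖ ^ (-p) * (1 + ‖x‖ ^ 2) ^ (-r / 2)‖
        = ‖x‖ ^ (-p) * (1 + ‖x‖ ^ 2) ^ (-r / 2) := Real.norm_of_nonneg (by positivity)
      _ ≤ 2 ^ (p / 2) * (1 + ‖x‖ ^ 2) ^ (-p / 2) * (1 + ‖x‖ ^ 2) ^ (-r / 2) := by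
        gcongr
        exact Real.rpow_neg_le_two_rpow_mul_one_add_sq_rpow_neg hx1 hp
      _ = 2 ^ (p / 2) * (1 + ‖x‖ ^ 2) ^ (-(p + r) / 2) := by
        rw [mul_assoc, ← Real.rpow_add (by positivity)]
        ring_nf
  · refine integrableOn_ball_of_norm_le_rpow (C := 1) (by exact_mod_cast (hp.trans_lt hpd)) hpd
      (Eventually.of_forall fun x ↦ ?_) hmeas
    rw [Real.norm_of_nonneg (by positivity), one_mul]
    exact mul_le_of_le_one_right (by positivity)
      (Real.rpow_le_one_of_one_le_of_nonpos (by nlinarith [sq_nonneg ‖x‖]) (by linarith))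

end

theorem exists_lintegral_mul_bubble_sq_le {m : ℕ} (hm : 3 ≤ m) {b : EuclideanSpace ℝ (Fin m) → ℝ}
    {C : ℝ} (hC : 0 ≤ C) (hb : ∀ x, b x ≤ C / (1 + ‖x‖ ^ 2) ^ 2) {α : ℝ} (hα₁ : 1 / 2 ≤ α)
    (hα₂ : α ≤ 1) :
    ∃ A, 0 ≤ A ∧ ∀ ε, 0 < ε →
      ∫⁻ x, ENNReal.ofReal (b x * bubble m ε x ^ 2) ≤ ENNReal.ofReal (A * ε ^ (2 * (1 - α))) := by
  have hm' : (3 : ℝ) ≤ m := by exact_mod_cast hm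
  have : Nonempty (Fin m) := ⟨⟨0, by omega⟩⟩
  set K := ((m : ℝ) * ((m : ℝ) - 2)) ^ (((m : ℝ) - 2) / 4)
  set w : EuclideanSpace ℝ (Fin m) → ℝ :=
    fun x ↦ ‖x‖ ^ (-((m : ℝ) - 2 * α)) * ((1 + ‖x‖ ^ 2) ^ 2)⁻¹ with hw_def
  have hw : Integrable w := by
    refine (integrable_norm_rpow_neg_mul_rpow_neg_one_add_norm_sq (p := m - 2 * α) (r := 4)
      (by linarith) (by rw [finrank_euclideanSpace_fin]; linarith)
      (by rw [finrank_euclideanSpace_fin]; linarith)).congr (ae_of_all _ fun x ↦ ?_)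
    simp only [hw_def, show -(4 : ℝ) / 2 = -(2 : ℕ) by norm_num, Real.rpow_neg_natCast, zpow_neg,
      zpow_natCast]
  refine ⟨C * K ^ 2 * ∫ x, w x, by positivity, fun ε hε ↦ ?_⟩
  have hpt : ∀ x ≠ 0, b x * bubble m ε x ^ 2 ≤ C * K ^ 2 * ε ^ (2 * (1 - α)) * w x := by
    intro x hx
    calc b x * bubble m ε x ^ 2 ≤ C / (1 + ‖x‖ ^ 2) ^ 2 * bubble m ε x ^ 2 :=
          mul_le_mul_of_nonneg_right (hb x) (sq_nonneg _)
      _ ≤ C / (1 + ‖x‖ ^ 2) ^ 2 * (K ^ 2 * (ε ^ (2 * (1 - α)) * ‖x‖ ^ (-((m : ℝ) - 2 * α)))) :=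
          mul_le_mul_of_nonneg_left (bubble_sq_le (by linarith) (by linarith) hε hx)
            (by positivity)
      _ = C * K ^ 2 * ε ^ (2 * (1 - α)) * w x := by
          rw [hw_def, div_eq_mul_inv]
          ring
  calc ∫⁻ x, ENNReal.ofReal (b x * bubble m ε x ^ 2)
      ≤ ∫⁻ x, ENNReal.ofReal (C * K ^ 2 * ε ^ (2 * (1 - α)) * w x) := by
        refine lintegral_mono_ae ?_
        filter_upwards [Measure.ae_ne volume 0] with x hx
        exact ENNReal.ofReal_le_ofReal (hpt x hx)
    _ = ENNReal.ofReal (∫ x, C * K ^ 2 * ε ^ (2 * (1 - α)) * w x) :=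
        (ofReal_integral_eq_lintegral_ofReal (hw.const_mul _)
          (ae_of_all _ fun x ↦ by positivity)).symm
    _ = ENNReal.ofReal (C * K ^ 2 * (∫ x, w x) * ε ^ (2 * (1 - α))) := by
        rw [integral_const_mul]
        ring_nf

theorem bubble_weighted_l2_estimate_general (m : ℕ) (hm : 3 ≤ m)
    (b : EuclideanSpace ℝ (Fin m) → ℝ)
    (C : ℝ) (hC : 0 < C)
    (hb_bound : ∀ x, b x ≤ C / (1 + ‖x‖ ^ 2) ^ 2) :
    (∀ α : ℝ, 1 / 2 < α → α < 1 → ∃ C' : ℝ, 0 < C' ∧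
      ∀ ε : ℝ, 0 < ε → ε < 1 →
        (∫⁻ x : EuclideanSpace ℝ (Fin m), ENNReal.ofReal (b x * bubble m ε x ^ 2)) ≤
          ENNReal.ofReal (C' * (ε ^ 2 + ε ^ (2 * (1 - α))))) ∧
    Tendsto (fun ε : ℝ =>
        ∫⁻ x : EuclideanSpace ℝ (Fin m), ENNReal.ofReal (b x * bubble m ε x ^ 2))
      (nhdsWithin 0 (Set.Ioi 0)) (nhds 0) := by
  refine ⟨fun α hα₁ hα₂ ↦ ?_, ?_⟩
  · obtain ⟨A, hA, hbound⟩ :=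
      exists_lintegral_mul_bubble_sq_le hm hC.le hb_bound hα₁.le hα₂.le
    refine ⟨A + 1, by positivity, fun ε hε _ ↦ (hbound ε hε).trans (ENNReal.ofReal_le_ofReal ?_)⟩
    exact mul_le_mul (by linarith) (le_add_of_nonneg_left (sq_nonneg ε)) (by positivity)
      (by positivity)
  · obtain ⟨A, -, hbound⟩ :=
      exists_lintegral_mul_bubble_sq_le (α := 3 / 4) hm hC.le hb_bound (by norm_num) (by norm_num)
    have hmajorant : Tendsto (fun ε : ℝ ↦ ENNReal.ofReal (A * ε ^ (2 * (1 - 3 / 4 : ℝ))))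
        (nhdsWithin 0 (Set.Ioi 0)) (nhds 0) := by
      simpa using ENNReal.tendsto_ofReal
        (((tendsto_nhdsWithin_of_tendsto_nhds tendsto_id).rpow_const_nhds_zero
          (by norm_num : (0 : ℝ) < 2 * (1 - 3 / 4))).const_mul A)
    exact tendsto_of_tendsto_of_tendsto_of_le_of_le' tendsto_const_nhds hmajorant
      (Eventually.of_forall fun _ ↦ zero_le) (eventually_mem_nhdsWithin.mono hbound)

/-- if `0 ≤ b̃(x) ≤ C(1+|x|²)⁻²`, then for every `α ∈ (1/2, 1)` there is
`C' > 0` with `∫ b̃ U_ε² ≤ C'(ε² + ε^{2(1−α)})` for all `ε ∈ (0,1)`; in particular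
`∫ b̃ U_ε² → 0` as `ε → 0⁺`. -/
theorem bubble_weighted_l2_estimate (m : ℕ) (hm : 3 ≤ m)
    (b : EuclideanSpace ℝ (Fin m) → ℝ) (hb_meas : Measurable b)
    (C : ℝ) (hC : 0 < C)
    (hb_nonneg : ∀ x, 0 ≤ b x)
    (hb_bound : ∀ x, b x ≤ C / (1 + ‖x‖ ^ 2) ^ 2) :
    (∀ α : ℝ, 1 / 2 < α → α < 1 → ∃ C' : ℝ, 0 < C' ∧
      ∀ ε : ℝ, 0 < ε → ε < 1 →
        (∫⁻ x : EuclideanSpace ℝ (Fin m), ENNReal.ofReal (b x * bubble m ε x ^ 2)) ≤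
          ENNReal.ofReal (C' * (ε ^ 2 + ε ^ (2 * (1 - α))))) ∧
    Tendsto (fun ε : ℝ =>
        ∫⁻ x : EuclideanSpace ℝ (Fin m), ENNReal.ofReal (b x * bubble m ε x ^ 2))
      (nhdsWithin 0 (Set.Ioi 0)) (nhds 0) :=
  bubble_weighted_l2_estimate_general m hm b C hC hb_bound
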